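/- Let a>0 and let γ₀,γ₁ ≥ 0 with γ₁ ≤ 2/a and γ₀ − γ₁ ≤ 2. Then any smooth solution (u,v) on ℂ∖{0} of the system Δu = 4(e^{au} − e^{v−u}), Δv = 4(e^{v−u} − e^{−av}) with asymptotic data (γ₀,γ₁) satisfies u(z) ≤ 0 and v(z) ≤ 0 for all z ∈ ℂ∖{0}. -/

import Mathlib

open Filter

/-- The Euclidean Laplacian of `f : ℂ → ℝ`, viewing `ℂ ≅ ℝ²` with orthonormal
directions `1` and `I`. -/
noncomputable def lap (f : ℂ → ℝ) (z : ℂ) : ℝ :=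
  iteratedFDeriv ℝ 2 f z ![1, 1] + iteratedFDeriv ℝ 2 f z ![Complex.I, Complex.I]

/-- `f` is smooth on `ℂ ∖ {0}`. -/
def SmoothOffZero (f : ℂ → ℝ) : Prop := ContDiffOn ℝ (⊤ : ℕ∞) f {(0 : ℂ)}ᶜ

/-- `f z → 0` as `|z| → ∞`. -/
def TendstoZeroAtInfty (f : ℂ → ℝ) : Prop :=
  Tendsto f (comap (fun z : ℂ => ‖z‖) atTop) (nhds 0)

/-- `f z / log |z| → γ` as `z → 0`. -/
def LogAsymAtZero (γ : ℝ) (f : ℂ → ℝ) : Prop :=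
  Tendsto (fun z : ℂ => f z / Real.log ‖z‖) (nhdsWithin 0 {(0 : ℂ)}ᶜ) (nhds γ)

/-- `(u, v)` is a smooth solution on `ℂ ∖ {0}` of the two-function tt*-Toda system
`Δu = 4(e^{au} − e^{v−u})`, `Δv = 4(e^{v−u} − e^{−bv})`. -/
def IsTodaSol (a b : ℝ) (u v : ℂ → ℝ) : Prop :=
  SmoothOffZero u ∧ SmoothOffZero v ∧
  ∀ z : ℂ, z ≠ 0 →
    lap u z = 4 * (Real.exp (a * u z) - Real.exp (v z - u z)) ∧
    lap v z = 4 * (Real.exp (v z - u z) - Real.exp (-(b * v z)))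

/-- `(u, v)` has asymptotic data `(γ, δ)`: `u, v → 0` at `∞` and
`u(z)/log|z| → γ`, `v(z)/log|z| → δ` at `0`. -/
def HasAsymData (γ δ : ℝ) (u v : ℂ → ℝ) : Prop :=
  TendstoZeroAtInfty u ∧ TendstoZeroAtInfty v ∧ LogAsymAtZero γ u ∧ LogAsymAtZero δ v

/-!
Fix `η > 0` and `R` so large that `u, v ≤ η` on `|z| ≥ R`. For `ε > 0` the function
`G = max(u, v) + ε log|z|` tends to `-∞` at `0` because `γ₀, γ₁ ≥ 0`, so it attains its maximum
on the punctured disc `0 < |z| ≤ R`. If the maximum is interior and, say, `u ≥ v` there, then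
`u + ε log|z|` has a local maximum too; since `log|z|` is harmonic, `Δu ≤ 0` there, i.e.
`e^{au} ≤ e^{v-u}`, so `au ≤ v - u ≤ 0` and `u ≤ 0` (symmetrically `v - u ≤ -bv` forces `v ≤ 0`).
Hence `G ≤ η + ε log R` on the disc; letting `ε → 0` and then `η → 0` gives `u, v ≤ 0`.
-/

open Topology Set Metric Laplacian InnerProductSpace

theorem IsLocalMax.deriv_deriv_nonpos {f : ℝ → ℝ} {x : ℝ} (h : IsLocalMax f x)
    (hc : ContinuousAt f x) : deriv (deriv f) x ≤ 0 := by
  by_contra! hpos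
  have hconst : f =ᶠ[𝓝 x] fun _ => f x :=
    (h.and (isLocalMin_of_deriv_deriv_pos hpos h.deriv_eq_zero hc)).mono
      fun y hy => le_antisymm hy.1 hy.2
  have : deriv (deriv f) x = 0 := by
    rw [hconst.deriv.deriv_eq]
    simp
  exact hpos.ne' this

section LocalMax

variable {E : Type*} [NormedAddCommGroup E]

theorem IsLocalMax.iteratedFDeriv_two_nonpos [NormedSpace ℝ E] {f : E → ℝ} {x : E}
    (h : IsLocalMax f x) (hf : ContDiffAt ℝ 2 f x) (w : E) :
    iteratedFDeriv ℝ 2 f x ![w, w] ≤ 0 := by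
  have hline : ∀ t : ℝ, HasDerivAt (fun s : ℝ => x + s • w) w t := fun t => by
    simpa using ((hasDerivAt_id t).smul_const w).const_add x
  set line : ℝ → E := fun s => x + s • w
  have hline0 : line 0 = x := by simp [line]
  have hcont : ContinuousAt line 0 := (hline 0).continuousAt
  rw [← hline0] at h hf
  have hderiv : deriv (f ∘ line) =ᶠ[𝓝 0] fun t => fderiv ℝ f (line t) w := by
    have hdiff : ∀ᶠ y in 𝓝 (line 0), DifferentiableAt ℝ f y :=
      (hf.eventually (by simp)).mono fun y hy => hy.differentiableAt (by simp)
    filter_upwards [hcont.tendsto.eventually hdiff] with t ht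
    exact (ht.hasFDerivAt.comp_hasDerivAt t (hline t)).deriv
  have hderiv2 :
      HasDerivAt (fun t => fderiv ℝ f (line t) w) (fderiv ℝ (fderiv ℝ f) (line 0) w w) 0 := by
    have hdf : DifferentiableAt ℝ (fderiv ℝ f) (line 0) :=
      (hf.fderiv_right (m := 1) (by norm_num)).differentiableAt (by simp)
    simpa using (hdf.hasFDerivAt.comp_hasDerivAt 0 (hline 0)).clm_apply (hasDerivAt_const 0 w)
  rw [iteratedFDeriv_two_apply, ← hline0]
  simpa [hderiv.deriv_eq, hderiv2.deriv] using
    (h.comp_continuous hcont).deriv_deriv_nonpos (hf.continuousAt.comp hcont)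

variable [InnerProductSpace ℝ E] [FiniteDimensional ℝ E]

theorem IsLocalMax.laplacian_nonpos {f : E → ℝ} {x : E} (h : IsLocalMax f x)
    (hf : ContDiffAt ℝ 2 f x) : Δ f x ≤ 0 := by
  rw [laplacian_eq_iteratedFDeriv_stdOrthonormalBasis]
  exact Finset.sum_nonpos fun i _ => h.iteratedFDeriv_two_nonpos hf _

theorem IsLocalMax.laplacian_nonpos_of_add_harmonicAt {f g : E → ℝ} {x : E}
    (h : IsLocalMax (f + g) x) (hf : ContDiffAt ℝ 2 f x) (hg : HarmonicAt g x) : Δ f x ≤ 0 := by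
  have := h.laplacian_nonpos (hf.add hg.1)
  rwa [hf.laplacian_add hg.1, hg.2.eq_of_nhds, Pi.zero_apply, add_zero] at this

end LocalMax

theorem exists_isMaxOn_closedBall_diff_singleton {X : Type*} [MetricSpace X] [ProperSpace X]
    {G : X → ℝ} {c w : X} {R : ℝ} (hw : w ∈ closedBall c R \ {c})
    (hG : ContinuousOn G (closedBall c R \ {c})) (hGc : Tendsto G (𝓝[≠] c) atBot) :
    ∃ z ∈ closedBall c R \ {c}, IsMaxOn G (closedBall c R \ {c}) z := by
  obtain ⟨δ, hδ, hδG⟩ := mem_nhdsWithin_iff.1 (hGc.eventually (eventually_le_atBot (G w)))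
  have hKs : insert w (closedBall c R \ ball c δ) ⊆ closedBall c R \ {c} :=
    insert_subset hw (sdiff_subset_sdiff_right (singleton_subset_iff.2 (mem_ball_self hδ)))
  obtain ⟨z, hzK, hz⟩ := (((isCompact_closedBall c R).diff isOpen_ball).insert w).exists_isMaxOn
    (insert_nonempty _ _) (hG.mono hKs)
  refine ⟨z, hKs hzK, fun y hy => ?_⟩
  by_cases hyδ : y ∈ ball c δ
  · have hwz : G w ≤ G z := hz (mem_insert w _)
    exact (hδG ⟨hyδ, hy.2⟩).trans hwz
  · exact hz (mem_insert_of_mem w ⟨hy.1, hyδ⟩)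

theorem le_of_forall_pos_add_mul_le {x y c d : ℝ} (h : ∀ ε > 0, x + ε * c ≤ y + ε * d) :
    x ≤ y := by
  have hlim : Tendsto (fun ε : ℝ => y + ε * d - ε * c) (𝓝[>] 0) (𝓝 y) :=
    tendsto_nhdsWithin_of_tendsto_nhds (Continuous.tendsto' (by fun_prop) 0 y (by simp))
  exact ge_of_tendsto hlim (eventually_nhdsWithin_of_forall fun ε hε => by linarith [h ε hε])

theorem lap_eq_laplacian (f : ℂ → ℝ) : lap f = Δ f :=
  (laplacian_eq_iteratedFDeriv_complexPlane f).symm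

theorem SmoothOffZero.contDiffAt {f : ℂ → ℝ} (hf : SmoothOffZero f) {z : ℂ} (hz : z ≠ 0) :
    ContDiffAt ℝ 2 f z :=
  (ContDiffOn.contDiffAt hf (isOpen_compl_singleton.mem_nhds hz)).of_le
    (WithTop.coe_le_coe.2 le_top)

theorem SmoothOffZero.continuousOn {f : ℂ → ℝ} (hf : SmoothOffZero f) :
    ContinuousOn f {0}ᶜ :=
  ContDiffOn.continuousOn hf

theorem SmoothOffZero.lap_nonpos_of_isLocalMax {f : ℂ → ℝ} (hf : SmoothOffZero f) {z : ℂ}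
    (hz : z ≠ 0) {ε : ℝ} (hmax : IsLocalMax (fun w => f w + ε * Real.log ‖w‖) z) :
    lap f z ≤ 0 := by
  rw [lap_eq_laplacian]
  exact IsLocalMax.laplacian_nonpos_of_add_harmonicAt (g := ε • fun w => Real.log ‖w‖) hmax
    (hf.contDiffAt hz) ((analyticAt_id.harmonicAt_log_norm hz).const_smul)

theorem LogAsymAtZero.tendsto_add_mul_log_atBot {f : ℂ → ℝ} {γ ε : ℝ} (hf : LogAsymAtZero γ f)
    (hγ : 0 ≤ γ) (hε : 0 < ε) :
    Tendsto (fun z => f z + ε * Real.log ‖z‖) (𝓝[≠] 0) atBot := by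
  have hlog : Tendsto (fun z : ℂ => Real.log ‖z‖) (𝓝[≠] 0) atBot :=
    Real.tendsto_log_nhdsGT_zero.comp tendsto_norm_nhdsNE_zero
  refine ((hf.add_const ε).pos_mul_atBot (by linarith) hlog).congr' ?_
  filter_upwards [hlog.eventually_lt_atBot 0] with z hz
  rw [add_mul, div_mul_cancel₀ _ hz.ne]

theorem TendstoZeroAtInfty.exists_forall_le {f : ℂ → ℝ} (hf : TendstoZeroAtInfty f) {η : ℝ}
    (hη : 0 < η) : ∃ R, ∀ z : ℂ, R ≤ ‖z‖ → f z ≤ η := by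
  simpa using (atTop_basis.comap _).eventually_iff.1 (hf.eventually (eventually_le_nhds hη))

namespace IsTodaSol

variable {a b ε : ℝ} {u v : ℂ → ℝ}

theorem fst_nonpos_of_isLocalMax (ha : 0 < a) (hsol : IsTodaSol a b u v) {z : ℂ} (hz : z ≠ 0)
    (hmax : IsLocalMax (fun w => u w + ε * Real.log ‖w‖) z) (hvu : v z ≤ u z) : u z ≤ 0 := by
  have hlap := hsol.1.lap_nonpos_of_isLocalMax hz hmax
  rw [(hsol.2.2 z hz).1] at hlap
  have : a * u z ≤ v z - u z := Real.exp_le_exp.1 (by linarith)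
  nlinarith

theorem snd_nonpos_of_isLocalMax (hb : 0 < b) (hsol : IsTodaSol a b u v) {z : ℂ} (hz : z ≠ 0)
    (hmax : IsLocalMax (fun w => v w + ε * Real.log ‖w‖) z) (huv : u z ≤ v z) : v z ≤ 0 := by
  have hlap := hsol.2.1.lap_nonpos_of_isLocalMax hz hmax
  rw [(hsol.2.2 z hz).2] at hlap
  have : v z - u z ≤ -(b * v z) := Real.exp_le_exp.1 (by linarith)
  nlinarith

theorem max_nonpos_of_isLocalMax (ha : 0 < a) (hb : 0 < b) (hsol : IsTodaSol a b u v) {z : ℂ}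
    (hz : z ≠ 0) (hmax : IsLocalMax (fun w => max (u w) (v w) + ε * Real.log ‖w‖) z) :
    max (u z) (v z) ≤ 0 := by
  rcases le_total (v z) (u z) with hvu | huv
  · rw [max_eq_left hvu]
    refine hsol.fst_nonpos_of_isLocalMax (ε := ε) ha hz (hmax.mono fun w hw => ?_) hvu
    dsimp only at hw ⊢
    rw [max_eq_left hvu] at hw
    linarith [le_max_left (u w) (v w)]
  · rw [max_eq_right huv]
    refine hsol.snd_nonpos_of_isLocalMax (ε := ε) hb hz (hmax.mono fun w hw => ?_) huv
    dsimp only at hw ⊢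
    rw [max_eq_right huv] at hw
    linarith [le_max_right (u w) (v w)]

theorem max_add_mul_log_le (ha : 0 < a) (hb : 0 < b) (hsol : IsTodaSol a b u v) {R M : ℝ}
    (hε : 0 ≤ ε) (hR : 0 < R) (hM : 0 ≤ M)
    (hu : Tendsto (fun z => u z + ε * Real.log ‖z‖) (𝓝[≠] 0) atBot)
    (hv : Tendsto (fun z => v z + ε * Real.log ‖z‖) (𝓝[≠] 0) atBot)
    (hbdry : ∀ z : ℂ, ‖z‖ = R → u z ≤ M ∧ v z ≤ M) {z : ℂ} (hz : z ≠ 0) (hzR : ‖z‖ ≤ R) :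
    max (u z) (v z) + ε * Real.log ‖z‖ ≤ M + ε * Real.log R := by
  set G : ℂ → ℝ := fun z => max (u z) (v z) + ε * Real.log ‖z‖
  have hGcont : ContinuousOn G (closedBall 0 R \ {0}) :=
    ((hsol.1.continuousOn.sup hsol.2.1.continuousOn).add (continuousOn_const.mul
      (continuous_norm.continuousOn.log fun _ hw => norm_ne_zero_iff.2 hw))).mono
      (sdiff_subset_compl _ _)
  have hG0 : Tendsto G (𝓝[≠] 0) atBot :=
    (tendsto_sup_atBot _ hu hv).congr fun w => max_add_add_right _ _ _
  have hRmem : (R : ℂ) ∈ closedBall 0 R \ {0} := by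
    simp [Complex.norm_real, abs_of_pos hR, hR.ne']
  obtain ⟨z₀, ⟨hz₀R, hz₀⟩, hmax⟩ := exists_isMaxOn_closedBall_diff_singleton hRmem hGcont hG0
  rw [mem_closedBall_zero_iff] at hz₀R
  have hGz : G z ≤ G z₀ := hmax ⟨mem_closedBall_zero_iff.2 hzR, hz⟩
  refine hGz.trans ?_
  rcases hz₀R.eq_or_lt with hz₀R | hz₀R
  · obtain ⟨hu₀, hv₀⟩ := hbdry z₀ hz₀R
    simp only [G, hz₀R]
    linarith [max_le hu₀ hv₀]
  · have hnhds : closedBall 0 R \ {0} ∈ 𝓝 z₀ :=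
      mem_of_superset ((isOpen_ball.inter isOpen_compl_singleton).mem_nhds
        ⟨mem_ball_zero_iff.2 hz₀R, hz₀⟩) fun y hy => ⟨ball_subset_closedBall hy.1, hy.2⟩
    have hmax₀ := hsol.max_nonpos_of_isLocalMax ha hb hz₀ (hmax.isLocalMax hnhds)
    have hlog : Real.log ‖z₀‖ ≤ Real.log R := Real.log_le_log (norm_pos_iff.2 hz₀) hz₀R.le
    simp only [G]
    nlinarith

end IsTodaSol

theorem toda_solution_nonpositive_general (a γ₀ γ₁ : ℝ) (ha : 0 < a)
    (h0 : 0 ≤ γ₀) (h1 : 0 ≤ γ₁)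
    (u v : ℂ → ℝ) (hsol : IsTodaSol a a u v) (hasym : HasAsymData γ₀ γ₁ u v) :
    ∀ z : ℂ, z ≠ 0 → u z ≤ 0 ∧ v z ≤ 0 := by
  obtain ⟨hu_infty, hv_infty, hu_zero, hv_zero⟩ := hasym
  intro z hz
  suffices max (u z) (v z) ≤ 0 from max_le_iff.1 this
  refine le_of_forall_pos_le_add fun η hη => ?_
  rw [zero_add]
  obtain ⟨R₁, hR₁⟩ := hu_infty.exists_forall_le hη
  obtain ⟨R₂, hR₂⟩ := hv_infty.exists_forall_le hη
  set R := max ‖z‖ (max R₁ R₂)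
  have hbdry : ∀ w : ℂ, ‖w‖ = R → u w ≤ η ∧ v w ≤ η := fun w hw =>
    ⟨hR₁ w (by simp [hw, R]), hR₂ w (by simp [hw, R])⟩
  exact le_of_forall_pos_add_mul_le fun ε hε =>
    hsol.max_add_mul_log_le ha ha hε.le ((norm_pos_iff.2 hz).trans_le (le_max_left _ _)) hη.le
      (hu_zero.tendsto_add_mul_log_atBot h0 hε) (hv_zero.tendsto_add_mul_log_atBot h1 hε) hbdry hz
      (le_max_left _ _)

/-- In the equal-parameter case with nonnegative asymptotic data, any solution
is nonpositive. -/
theorem toda_solution_nonpositive (a γ₀ γ₁ : ℝ) (ha : 0 < a)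
    (h0 : 0 ≤ γ₀) (h1 : 0 ≤ γ₁) (h2 : γ₁ ≤ 2 / a) (h3 : γ₀ - γ₁ ≤ 2)
    (u v : ℂ → ℝ) (hsol : IsTodaSol a a u v) (hasym : HasAsymData γ₀ γ₁ u v) :
    ∀ z : ℂ, z ≠ 0 → u z ≤ 0 ∧ v z ≤ 0 :=
  toda_solution_nonpositive_general a γ₀ γ₁ ha h0 h1 u v hsol hasym
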